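/- Assume (K0) and (K1) with constants p₀ > 1, t₀ > 0 and c̄ > 1, and let Φ be the function from Lemma 1.1 (i.e. Φ : [0,r₀) → [0,∞) is strictly increasing, continuous, Φ(0)=0, and ∫₀^{Φ(r)} l(s) ds = r² for r ∈ (0,r₀), where r₀ = (∫₀^∞ l)^{1/2}). Then there exist r* ∈ (0, r₀) with Φ(r*) ≤ min{1, t₀} and a constant C > 0 depending only on p₀ and c̄ such that for every p with 1 ≤ p ≤ p₀ and every r ∈ (0, r*]: ( ∫₀^{Φ(r)} l(s)^p ds ) · Φ(r)^{p−1} ≤ C · r^{2p}. -/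

import Mathlib

/-!
Put `T = Φ(r)`, so that `∫₀^T l = r²` and, `l` being nonincreasing, `l(T) ≤ c := r²/T`.
Splitting `l^p ≤ c^{p-1} l + c^{p-p₀} l^{p₀}` pointwise and bounding `∫₀^T l^{p₀} ≤ c̄ T l(T)^{p₀}
≤ c̄ T c^{p₀}` by (K1) gives `∫₀^T l^p ≤ (1 + c̄) T c^p`, which is the claim with `C = 1 + c̄`.
The radius `r*` only has to make `Φ(r*) ≤ min{1, t₀}`, which continuity of `Φ` at `0` provides;
`r₀ > 0` because `k * l = 1` rules out `l = 0` a.e.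
-/

open MeasureTheory Set intervalIntegral Filter ENNReal

/-- `r₀ = (∫₀^∞ l)^{1/2} ∈ (0,∞]` (as an extended nonnegative real). -/
noncomputable def rZero (l : ℝ → ℝ) : ℝ≥0∞ :=
  (∫⁻ t in Set.Ioi (0:ℝ), ENNReal.ofReal (l t)) ^ ((1:ℝ) / 2)

/-- The defining properties of the intrinsic scaling function `Φ` from Lemma 1.1:
`Φ : [0,r₀) → [0,∞)` is strictly increasing, continuous, `Φ(0) = 0` and
`∫₀^{Φ(r)} l = r²` for `r ∈ (0, r₀)`. -/
def IsScalingFunction (l : ℝ → ℝ) (Φ : ℝ → ℝ) : Prop :=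
  (∀ r : ℝ, 0 ≤ r → ENNReal.ofReal r < rZero l → 0 ≤ Φ r) ∧
  StrictMonoOn Φ {r : ℝ | 0 ≤ r ∧ ENNReal.ofReal r < rZero l} ∧
  ContinuousOn Φ {r : ℝ | 0 ≤ r ∧ ENNReal.ofReal r < rZero l} ∧
  Φ 0 = 0 ∧
  (∀ r : ℝ, 0 < r → ENNReal.ofReal r < rZero l →
    (∫ s in (0:ℝ)..(Φ r), l s) = r ^ 2)

theorem Real.rpow_le_rpow_sub_one_mul_add_rpow_sub_mul {a c p q : ℝ} (ha : 0 ≤ a) (hc : 0 < c)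
    (hp : 1 ≤ p) (hpq : p ≤ q) : a ^ p ≤ c ^ (p - 1) * a + c ^ (p - q) * a ^ q := by
  rcases ha.eq_or_lt with rfl | ha
  · rw [Real.zero_rpow (by linarith), Real.zero_rpow (by linarith)]
    simp
  have h₁ : 0 ≤ c ^ (p - 1) * a := by positivity
  have h₂ : 0 ≤ c ^ (p - q) * a ^ q := by positivity
  rcases le_total a c with hac | hca
  · have : a ^ p ≤ c ^ (p - 1) * a := by
      rw [← sub_add_cancel p 1, Real.rpow_add_one ha.ne', add_sub_cancel_right]
      gcongr
    linarith
  · have : a ^ p ≤ c ^ (p - q) * a ^ q := by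
      rw [← sub_add_cancel p q, Real.rpow_add ha, add_sub_cancel_right]
      exact mul_le_mul_of_nonneg_right (Real.rpow_le_rpow_of_nonpos hc hca (by linarith))
        (by positivity)
    linarith

theorem integral_rpow_le_mul_integral_add_mul_integral_rpow {α : Type*} [MeasurableSpace α]
    {μ : Measure α} {f : α → ℝ} {c p q : ℝ} (hf : 0 ≤ᵐ[μ] f) (hfi : Integrable f μ)
    (hfq : Integrable (fun x ↦ f x ^ q) μ) (hc : 0 < c) (hp : 1 ≤ p) (hpq : p ≤ q) :
    ∫ x, f x ^ p ∂μ ≤ c ^ (p - 1) * ∫ x, f x ∂μ + c ^ (p - q) * ∫ x, f x ^ q ∂μ := by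
  rw [← MeasureTheory.integral_const_mul, ← MeasureTheory.integral_const_mul,
     ← integral_add (hfi.const_mul _) (hfq.const_mul _)]
  refine integral_mono_of_nonneg ?_ ((hfi.const_mul _).add (hfq.const_mul _)) ?_
  · filter_upwards [hf] with x hx using Real.rpow_nonneg hx p
  · filter_upwards [hf] with x hx
      using Real.rpow_le_rpow_sub_one_mul_add_rpow_sub_mul hx hc hp hpq

theorem AntitoneOn.mul_le_intervalIntegral {l : ℝ → ℝ} {T : ℝ} (hl : AntitoneOn l (Ioi 0))
    (hT : 0 < T) (hli : IntegrableOn l (Ioc 0 T)) : T * l T ≤ ∫ s in (0:ℝ)..T, l s := by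
  rw [intervalIntegral.integral_of_le hT.le]
  calc T * l T = ∫ _ in Ioc (0:ℝ) T, l T := by
        rw [setIntegral_const, Real.volume_real_Ioc_of_le hT.le, sub_zero, smul_eq_mul]
    _ ≤ ∫ s in Ioc (0:ℝ) T, l s :=
        setIntegral_mono_on (integrableOn_const measure_Ioc_lt_top.ne) hli measurableSet_Ioc
          fun s hs ↦ hl hs.1 hT hs.2

theorem intervalIntegral_rpow_mul_rpow_sub_one_le {l : ℝ → ℝ} {T cbar p q : ℝ}
    (hl₀ : ∀ t, 0 < t → 0 ≤ l t) (hl : AntitoneOn l (Ioi 0)) (hT : 0 < T)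
    (hli : IntegrableOn l (Ioc 0 T)) (hlq : IntegrableOn (fun s ↦ l s ^ q) (Ioc 0 T))
    (hm : 0 < ∫ s in (0:ℝ)..T, l s)
    (hK : (1 / T) * ∫ s in (0:ℝ)..T, l s ^ q ≤ cbar * l T ^ q) (hcbar : 0 ≤ cbar)
    (hp : 1 ≤ p) (hpq : p ≤ q) :
    (∫ s in (0:ℝ)..T, l s ^ p) * T ^ (p - 1) ≤ (1 + cbar) * (∫ s in (0:ℝ)..T, l s) ^ p := by
  set m := ∫ s in (0:ℝ)..T, l s
  set c := m / T
  have hc : 0 < c := by positivity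
  have hmc : m = c * T := (div_mul_cancel₀ m hT.ne').symm
  have hlT : l T ≤ c := by
    rw [le_div_iff₀ hT, mul_comm]
    exact hl.mul_le_intervalIntegral hT hli
  have hq : ∫ s in (0:ℝ)..T, l s ^ q ≤ cbar * T * c ^ q := by
    rw [one_div_mul_eq_div, div_le_iff₀ hT] at hK
    calc _ ≤ cbar * l T ^ q * T := hK
      _ = cbar * T * l T ^ q := by ring
      _ ≤ cbar * T * c ^ q := by gcongr; exacts [hl₀ T hT, by linarith]
  have hsplit : ∫ s in (0:ℝ)..T, l s ^ p ≤
      c ^ (p - 1) * m + c ^ (p - q) * ∫ s in (0:ℝ)..T, l s ^ q := by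
    simp only [m, intervalIntegral.integral_of_le hT.le]
    refine integral_rpow_le_mul_integral_add_mul_integral_rpow ?_ hli hlq hc hp hpq
    filter_upwards [ae_restrict_mem measurableSet_Ioc] with s hs using hl₀ s hs.1
  have e₁ : c ^ (p - 1) * c = c ^ p := by rw [← Real.rpow_add_one hc.ne', sub_add_cancel]
  have e₂ : c ^ (p - q) * c ^ q = c ^ p := by rw [← Real.rpow_add hc, sub_add_cancel]
  have e₃ : T ^ (p - 1) * T = T ^ p := by rw [← Real.rpow_add_one hT.ne', sub_add_cancel]
  calc (∫ s in (0:ℝ)..T, l s ^ p) * T ^ (p - 1)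
      ≤ (c ^ (p - 1) * m + c ^ (p - q) * (cbar * T * c ^ q)) * T ^ (p - 1) := by
        gcongr
        exact hsplit.trans (by gcongr)
    _ = (1 + cbar) * m ^ p := by
      rw [hmc, Real.mul_rpow hc.le hT.le]
      linear_combination
        T * T ^ (p - 1) * e₁ + cbar * T * T ^ (p - 1) * e₂ + (1 + cbar) * c ^ p * e₃

theorem rZero_pos_of_intervalIntegral_mul_eq_one {k l : ℝ → ℝ} (hl : ContinuousOn l (Ioi 0))
    (hl₀ : ∀ t, 0 < t → 0 ≤ l t) (hkl : ∫ s in (0:ℝ)..1, k (1 - s) * l s = 1) :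
    0 < rZero l := by
  refine ENNReal.rpow_pos_of_nonneg (pos_iff_ne_zero.2 fun h ↦ ?_) (by norm_num)
  have hl_ae : ∀ᵐ s ∂volume.restrict (Ioi (0:ℝ)), ENNReal.ofReal (l s) = 0 :=
    (lintegral_eq_zero_iff' (hl.aemeasurable measurableSet_Ioi).ennreal_ofReal).1 h
  have hkl_ae : ∀ᵐ s ∂volume.restrict (Ioc (0:ℝ) 1), k (1 - s) * l s = 0 := by
    filter_upwards [ae_restrict_of_ae_restrict_of_subset Ioc_subset_Ioi_self hl_ae,
      ae_restrict_mem measurableSet_Ioc] with s hs hs₀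
    rw [ENNReal.ofReal_eq_zero] at hs
    rw [le_antisymm hs (hl₀ s hs₀.1), mul_zero]
  rw [intervalIntegral.integral_of_le zero_le_one, integral_eq_zero_of_ae hkl_ae] at hkl
  exact zero_ne_one hkl

open Topology in
theorem IsScalingFunction.exists_pos_apply_lt {l Φ : ℝ → ℝ} (hΦ : IsScalingFunction l Φ)
    (hr₀ : 0 < rZero l) {b : ℝ} (hb : 0 < b) :
    ∃ r, 0 < r ∧ ENNReal.ofReal r < rZero l ∧ Φ r < b := by
  obtain ⟨-, -, hcont, hΦ0, -⟩ := hΦ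
  set S := {r : ℝ | 0 ≤ r ∧ ENNReal.ofReal r < rZero l}
  have hS : S ∈ 𝓝[≥] (0:ℝ) :=
    inter_mem_nhdsWithin (Ici 0) <| ENNReal.continuous_ofReal.continuousAt.preimage_mem_nhds
      (Iio_mem_nhds (by simpa using hr₀))
  have hΦ₀ : Tendsto Φ (𝓝[>] 0) (𝓝 0) := by
    have := (hcont 0 (mem_of_mem_nhdsWithin self_mem_Ici hS)).tendsto
    rw [hΦ0] at this
    exact this.mono_left
      ((nhdsWithin_mono _ Ioi_subset_Ici_self).trans (nhdsWithin_le_of_mem hS))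
  have hS' : S ∈ 𝓝[>] (0:ℝ) := nhdsWithin_mono _ Ioi_subset_Ici_self hS
  obtain ⟨r, hΦr, hrS, hr⟩ :=
    ((hΦ₀.eventually_lt_const hb).and (Filter.inter_mem hS' self_mem_nhdsWithin)).exists
  exact ⟨r, hr, hrS.2, hΦr⟩

theorem IsScalingFunction.apply_mem_Ioc {l Φ : ℝ → ℝ} (hΦ : IsScalingFunction l Φ) {r s : ℝ}
    (hs : ENNReal.ofReal s < rZero l) (hr : 0 < r) (hrs : r ≤ s) : Φ r ∈ Ioc 0 (Φ s) := by
  obtain ⟨-, hmono, -, hΦ0, -⟩ := hΦ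
  have h0 : (0:ℝ) ∈ {r : ℝ | 0 ≤ r ∧ ENNReal.ofReal r < rZero l} :=
    ⟨le_rfl, by simpa using bot_le.trans_lt hs⟩
  have hrS : r ∈ {r : ℝ | 0 ≤ r ∧ ENNReal.ofReal r < rZero l} :=
    ⟨hr.le, (ENNReal.ofReal_le_ofReal hrs).trans_lt hs⟩
  exact ⟨hΦ0 ▸ hmono h0 hrS hr, hmono.monotoneOn hrS ⟨hr.le.trans hrs, hs⟩ hrs⟩

theorem l_norm_Phi_estimate_general (p₀ cbar : ℝ) (hcbar : 1 < cbar) :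
    ∃ C : ℝ, 0 < C ∧
      ∀ (k l Φ : ℝ → ℝ) (t₀ : ℝ),
        -- (K0)
        (∀ S : ℝ, 0 < S → IntegrableOn k (Ioc 0 S)) →
        (∀ S : ℝ, 0 < S → IntegrableOn l (Ioc 0 S)) →
        ContDiffOn ℝ 1 k (Ioi 0) →
        ContDiffOn ℝ 1 l (Ioi 0) →
        (∀ t : ℝ, 0 < t → 0 ≤ k t) →
        (∀ t : ℝ, 0 < t → 0 ≤ l t) →
        AntitoneOn k (Ioi 0) →
        AntitoneOn l (Ioi 0) →
        ConvexOn ℝ (Ioi 0) k →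
        (∀ t : ℝ, 0 < t → ∫ s in (0:ℝ)..t, k (t - s) * l s = 1) →
        -- (K1)
        0 < t₀ →
        IntegrableOn (fun s => l s ^ p₀) (Ioo 0 t₀) →
        (∀ t : ℝ, 0 < t → t ≤ t₀ →
          (1 / t) * ∫ s in (0:ℝ)..t, l s ^ p₀ ≤ cbar * l t ^ p₀) →
        -- Φ is the scaling function from Lemma 1.1
        IsScalingFunction l Φ →
        ∃ rstar : ℝ, 0 < rstar ∧ ENNReal.ofReal rstar < rZero l ∧
          Φ rstar ≤ min 1 t₀ ∧
          ∀ p : ℝ, 1 ≤ p → p ≤ p₀ → ∀ r : ℝ, 0 < r → r ≤ rstar →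
            (∫ s in (0:ℝ)..(Φ r), l s ^ p) * (Φ r) ^ (p - 1) ≤ C * r ^ (2 * p) := by
  refine ⟨1 + cbar, by linarith, ?_⟩
  intro k l Φ t₀ _ hli _ hlC _ hl₀ _ hl _ hkl ht₀ hlq hK hΦ
  obtain ⟨rstar, hrstar, hrstar₀, hΦrstar⟩ := hΦ.exists_pos_apply_lt
    (rZero_pos_of_intervalIntegral_mul_eq_one hlC.continuousOn hl₀ (hkl 1 one_pos))
    (lt_min one_pos ht₀)
  refine ⟨rstar, hrstar, hrstar₀, hΦrstar.le, fun p hp hpp₀ r hr hrr ↦ ?_⟩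
  obtain ⟨hΦr, hΦrr⟩ := hΦ.apply_mem_Ioc hrstar₀ hr hrr
  have hΦrt₀ : Φ r ≤ t₀ := hΦrr.trans (hΦrstar.le.trans (min_le_right _ _))
  have hm : ∫ s in (0:ℝ)..Φ r, l s = r ^ 2 :=
    hΦ.2.2.2.2 r hr ((ENNReal.ofReal_le_ofReal hrr).trans_lt hrstar₀)
  have hlq' : IntegrableOn (fun s ↦ l s ^ p₀) (Ioc 0 (Φ r)) :=
    (integrableOn_Ioc_iff_integrableOn_Ioo (μ := volume)).2
      (hlq.mono_set (Ioo_subset_Ioo_right hΦrt₀))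
  rw [Real.rpow_mul hr.le, Real.rpow_two, ← hm]
  exact intervalIntegral_rpow_mul_rpow_sub_one_le hl₀ hl hΦr (hli _ hΦr) hlq'
    (hm ▸ by positivity) (hK _ hΦr hΦrt₀) (by linarith) hp hpp₀

/-- Lemma 2.7: under (K0) and (K1), there exist `r* ∈ (0, r₀)` with
`Φ(r*) ≤ min{1, t₀}` and a constant `C > 0` depending only on `p₀` and `c̄`
such that `(∫₀^{Φ(r)} l^p) Φ(r)^{p-1} ≤ C r^{2p}` for all `1 ≤ p ≤ p₀` and
`r ∈ (0, r*]`. -/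
theorem l_norm_Phi_estimate (p₀ cbar : ℝ) (hp₀ : 1 < p₀) (hcbar : 1 < cbar) :
    ∃ C : ℝ, 0 < C ∧
      ∀ (k l Φ : ℝ → ℝ) (t₀ : ℝ),
        -- (K0)
        (∀ S : ℝ, 0 < S → IntegrableOn k (Ioc 0 S)) →
        (∀ S : ℝ, 0 < S → IntegrableOn l (Ioc 0 S)) →
        ContDiffOn ℝ 1 k (Ioi 0) →
        ContDiffOn ℝ 1 l (Ioi 0) →
        (∀ t : ℝ, 0 < t → 0 ≤ k t) →
        (∀ t : ℝ, 0 < t → 0 ≤ l t) →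
        AntitoneOn k (Ioi 0) →
        AntitoneOn l (Ioi 0) →
        ConvexOn ℝ (Ioi 0) k →
        (∀ t : ℝ, 0 < t → ∫ s in (0:ℝ)..t, k (t - s) * l s = 1) →
        -- (K1)
        0 < t₀ →
        IntegrableOn (fun s => l s ^ p₀) (Ioo 0 t₀) →
        (∀ t : ℝ, 0 < t → t ≤ t₀ →
          (1 / t) * ∫ s in (0:ℝ)..t, l s ^ p₀ ≤ cbar * l t ^ p₀) →
        -- Φ is the scaling function from Lemma 1.1
        IsScalingFunction l Φ →
        ∃ rstar : ℝ, 0 < rstar ∧ ENNReal.ofReal rstar < rZero l ∧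
          Φ rstar ≤ min 1 t₀ ∧
          ∀ p : ℝ, 1 ≤ p → p ≤ p₀ → ∀ r : ℝ, 0 < r → r ≤ rstar →
            (∫ s in (0:ℝ)..(Φ r), l s ^ p) * (Φ r) ^ (p - 1) ≤ C * r ^ (2 * p) :=
  l_norm_Phi_estimate_general p₀ cbar hcbar
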